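/- arXiv:2602.23491 — 3 statements merged into one kernel-verified Lean document; each statement's English description precedes it below -/
import Mathlib

section
/- Let P(1) = [[1, 1/2],[0, 1/2]] and P(2) = [[1/2, 1],[1/2, 0]], defining the linear probability dynamics P on S_2 with time set {0,1,2} by P_0 = id, P_1(v) = P(1)v, P_2(v) = P(2)v. Since P(1) is injective, for all p₀, q₀ ∈ S_2, P_1(p₀) = P_1(q₀) implies P_2(p₀) = P_2(q₀); hence P is decomposable. Combined with the nonexistence of a stochastic X with P(2) = X·P(1), this dynamics is decomposable but not divisible. -/
/-- Column-stochastic real matrix. -/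
def ColStochastic {n : ℕ} (M : Matrix (Fin n) (Fin n) ℝ) : Prop :=
  (∀ i j, M i j ∈ Set.Icc (0:ℝ) 1) ∧ ∀ j, ∑ i, M i j = 1

/-- The linear dynamics given by `P(1) = [[1,1/2],[0,1/2]]`,
`P(2) = [[1/2,1],[1/2,0]]` is decomposable (since `P(1)` is injective) but not divisible. -/
theorem stmt_10 :
    (∀ p₀ ∈ stdSimplex ℝ (Fin 2), ∀ q₀ ∈ stdSimplex ℝ (Fin 2),
      (!![(1:ℝ), 1/2; 0, 1/2] : Matrix (Fin 2) (Fin 2) ℝ).mulVec p₀ =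
        (!![(1:ℝ), 1/2; 0, 1/2] : Matrix (Fin 2) (Fin 2) ℝ).mulVec q₀ →
      (!![(1:ℝ)/2, 1; 1/2, 0] : Matrix (Fin 2) (Fin 2) ℝ).mulVec p₀ =
        (!![(1:ℝ)/2, 1; 1/2, 0] : Matrix (Fin 2) (Fin 2) ℝ).mulVec q₀) ∧
    (∃ f : (Fin 2 → ℝ) → (Fin 2 → ℝ),
      (∀ x ∈ (fun p => (!![(1:ℝ), 1/2; 0, 1/2] : Matrix (Fin 2) (Fin 2) ℝ).mulVec p) ''
          stdSimplex ℝ (Fin 2), f x ∈ stdSimplex ℝ (Fin 2)) ∧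
      ∀ p ∈ stdSimplex ℝ (Fin 2),
        f ((!![(1:ℝ), 1/2; 0, 1/2] : Matrix (Fin 2) (Fin 2) ℝ).mulVec p) =
          (!![(1:ℝ)/2, 1; 1/2, 0] : Matrix (Fin 2) (Fin 2) ℝ).mulVec p) ∧
    ¬ ∃ X : Matrix (Fin 2) (Fin 2) ℝ,
        ColStochastic X ∧ !![(1:ℝ)/2, 1; 1/2, 0] = X * !![(1:ℝ), 1/2; 0, 1/2] := by
  refine ⟨?_, ?_, ?_⟩
  · -- decomposability precondition: P(1) injective on equal images
    intro p hp q hq h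
    have h0 := congrFun h 0
    have h1 := congrFun h 1
    simp [Matrix.mulVec, dotProduct, Fin.sum_univ_two] at h0 h1
    have e1 : p 1 = q 1 := by linarith
    have e0 : p 0 = q 0 := by linarith
    funext i
    fin_cases i <;>
      simp [Matrix.mulVec, dotProduct, Fin.sum_univ_two, e0, e1]
  · -- the decomposing map
    refine ⟨fun x => ![(x 0 + 3 * x 1) / 2, (x 0 - x 1) / 2], ?_, ?_⟩
    · rintro x ⟨p, hp, rfl⟩
      obtain ⟨hpos, hsum⟩ := hp
      rw [Fin.sum_univ_two] at hsum
      have h0 := hpos 0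
      have h1 := hpos 1
      constructor
      · intro i
        fin_cases i <;>
          · simp [Matrix.mulVec, dotProduct, Fin.sum_univ_two]
            linarith
      · rw [Fin.sum_univ_two]
        simp [Matrix.mulVec, dotProduct, Fin.sum_univ_two]
        linarith
    · intro p hp
      funext i
      fin_cases i <;>
        · simp [Matrix.mulVec, dotProduct, Fin.sum_univ_two]
          ring
  · -- not divisible
    rintro ⟨X, ⟨hX01, _⟩, hEq⟩
    have h00 := congrFun (congrFun hEq 0) 0
    have h01 := congrFun (congrFun hEq 0) 1
    simp [Matrix.mul_apply, Fin.sum_univ_two] at h00 h01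
    have := (hX01 0 1).2
    linarith
end

section
/- Let P be a decomposable linear probability dynamics on S_N with decomposing family {P_{t←t'}}. Then P is divisible (i.e. for each t' ≤ t there is a column-stochastic matrix P(t←t') with P(t) = P(t←t')·P(t')) if and only if every map P_{t←t'} can be extended to a convex-combination-preserving map S_N → S_N. -/
/-! A map of the simplex preserving binary convex combinations is, coordinatewise, both convex
and concave, so Jensen's inequality in both directions makes it preserve all finite convex
combinations. Writing a probability vector as the convex combination of the vertices `eⱼ`, such
a map is the column-stochastic matrix with columns `g eⱼ`; comparing `P(t)` and `X P(t')` on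
the vertices gives divisibility. The converse is immediate since matrices act linearly. -/

open Matrix

section ConvexCombination

variable {𝕜 E β ι : Type*} [Field 𝕜] [LinearOrder 𝕜] [IsStrictOrderedRing 𝕜]
  [AddCommGroup E] [Module 𝕜 E] [AddCommGroup β] [PartialOrder β] [IsOrderedAddMonoid β]
  [Module 𝕜 β] [IsStrictOrderedModule 𝕜 β] {s : Set E} {g : E → β}

theorem Convex.map_sum_eq_of_map_convexCombination (hs : Convex 𝕜 s)
    (hg : ∀ p ∈ s, ∀ q ∈ s, ∀ l ∈ Set.Icc (0:𝕜) 1,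
      g (l • p + (1 - l) • q) = l • g p + (1 - l) • g q)
    {t : Finset ι} {w : ι → 𝕜} {p : ι → E} (h₀ : ∀ i ∈ t, 0 ≤ w i) (h₁ : ∑ i ∈ t, w i = 1)
    (hmem : ∀ i ∈ t, p i ∈ s) :
    g (∑ i ∈ t, w i • p i) = ∑ i ∈ t, w i • g (p i) := by
  have hsegment : ∀ x ∈ s, ∀ y ∈ s, ∀ a b : 𝕜, 0 ≤ a → 0 ≤ b → a + b = 1 →
      g (a • x + b • y) = a • g x + b • g y := by
    intro x hx y hy a b ha hb hab
    obtain rfl : b = 1 - a := eq_sub_of_add_eq' hab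
    exact hg x hx y hy a ⟨ha, by linarith⟩
  have hconvex : ConvexOn 𝕜 s g := ⟨hs, fun x hx y hy a b ha hb hab =>
    (hsegment x hx y hy a b ha hb hab).le⟩
  have hconcave : ConcaveOn 𝕜 s g := ⟨hs, fun x hx y hy a b ha hb hab =>
    (hsegment x hx y hy a b ha hb hab).ge⟩
  exact le_antisymm (hconvex.map_sum_le h₀ h₁ hmem) (hconcave.le_map_sum h₀ h₁ hmem)

end ConvexCombination

section ColStochastic

variable {N : ℕ}

theorem colStochastic_iff_transpose_mem_stdSimplex {M : Matrix (Fin N) (Fin N) ℝ} :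
    ColStochastic M ↔ ∀ j, Mᵀ j ∈ stdSimplex ℝ (Fin N) :=
  ⟨fun hM j => ⟨fun i => (hM.1 i j).1, hM.2 j⟩,
    fun hM => ⟨fun i j => mem_Icc_of_mem_stdSimplex (hM j) i, fun j => (hM j).2⟩⟩

theorem mulVec_eq_sum_smul_transpose {m n R : Type*} [Fintype n] [CommSemiring R]
    (M : Matrix m n R) (v : n → R) :
    M *ᵥ v = ∑ j, v j • Mᵀ j := by
  simp [mulVec_eq_sum]

theorem ColStochastic.mulVec_mem_stdSimplex {M : Matrix (Fin N) (Fin N) ℝ}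
    (hM : ColStochastic M) {p : Fin N → ℝ} (hp : p ∈ stdSimplex ℝ (Fin N)) :
    M *ᵥ p ∈ stdSimplex ℝ (Fin N) := by
  rw [mulVec_eq_sum_smul_transpose]
  exact (convex_stdSimplex ℝ _).sum_mem (fun j _ => hp.1 j) hp.2
    (fun j _ => colStochastic_iff_transpose_mem_stdSimplex.mp hM j)

theorem exists_colStochastic_mulVec_eq {g : (Fin N → ℝ) → (Fin N → ℝ)}
    (hg_mem : ∀ p ∈ stdSimplex ℝ (Fin N), g p ∈ stdSimplex ℝ (Fin N))
    (hg : ∀ p ∈ stdSimplex ℝ (Fin N), ∀ q ∈ stdSimplex ℝ (Fin N), ∀ l ∈ Set.Icc (0:ℝ) 1,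
      g (l • p + (1 - l) • q) = l • g p + (1 - l) • g q) :
    ∃ X : Matrix (Fin N) (Fin N) ℝ, ColStochastic X ∧
      ∀ p ∈ stdSimplex ℝ (Fin N), g p = X *ᵥ p := by
  let X : Matrix (Fin N) (Fin N) ℝ := (Matrix.of fun j i => g (Pi.single j 1) i)ᵀ
  refine ⟨X, colStochastic_iff_transpose_mem_stdSimplex.mpr fun j =>
    hg_mem _ (single_mem_stdSimplex ℝ j), fun p hp => ?_⟩
  calc g p = g (∑ j, p j • Pi.single j 1) := by rw [← pi_eq_sum_univ' p]
    _ = ∑ j, p j • g (Pi.single j 1) :=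
      (convex_stdSimplex ℝ _).map_sum_eq_of_map_convexCombination hg (fun j _ => hp.1 j) hp.2
        (fun j _ => single_mem_stdSimplex ℝ j)
    _ = X *ᵥ p := (mulVec_eq_sum_smul_transpose X p).symm

end ColStochastic

theorem stmt_12_general (N : ℕ) (T : Set ℝ)
    (Pm : ℝ → Matrix (Fin N) (Fin N) ℝ)
    (hstoch : ∀ t ∈ T, ColStochastic (Pm t))
    (F : ℝ → ℝ → (Fin N → ℝ) → (Fin N → ℝ))
    (hFdecomp : ∀ t' ∈ T, ∀ t ∈ T, t' ≤ t →
      ∀ p ∈ stdSimplex ℝ (Fin N), F t t' ((Pm t').mulVec p) = (Pm t).mulVec p) :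
    (∀ t' ∈ T, ∀ t ∈ T, t' ≤ t →
      ∃ X : Matrix (Fin N) (Fin N) ℝ, ColStochastic X ∧ Pm t = X * Pm t') ↔
    (∀ t' ∈ T, ∀ t ∈ T, t' ≤ t →
      ∃ g : (Fin N → ℝ) → (Fin N → ℝ),
        (∀ p ∈ stdSimplex ℝ (Fin N), g p ∈ stdSimplex ℝ (Fin N)) ∧
        (∀ p ∈ stdSimplex ℝ (Fin N), ∀ q ∈ stdSimplex ℝ (Fin N),
          ∀ l ∈ Set.Icc (0:ℝ) 1,
            g (l • p + (1 - l) • q) = l • g p + (1 - l) • g q) ∧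
        (∀ x ∈ (fun p => (Pm t').mulVec p) '' stdSimplex ℝ (Fin N), g x = F t t' x)) := by
  constructor
  · intro hdiv t' ht' t ht htt
    obtain ⟨X, hX, hPX⟩ := hdiv t' ht' t ht htt
    refine ⟨(X *ᵥ ·), fun p hp => hX.mulVec_mem_stdSimplex hp,
      fun p _ q _ l _ => by simp only [mulVec_add, mulVec_smul], ?_⟩
    rintro _ ⟨p, hp, rfl⟩
    rw [hFdecomp t' ht' t ht htt p hp, hPX]
    exact mulVec_mulVec p X (Pm t')
  · intro hext t' ht' t ht htt
    obtain ⟨g, hg_mem, hg, hgF⟩ := hext t' ht' t ht htt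
    obtain ⟨X, hX, hgX⟩ := exists_colStochastic_mulVec_eq hg_mem hg
    refine ⟨X, hX, ext_of_mulVec_single fun j => ?_⟩
    have hj := single_mem_stdSimplex ℝ j
    rw [← mulVec_mulVec, ← hgX _ ((hstoch t' ht').mulVec_mem_stdSimplex hj),
      hgF _ ⟨_, hj, rfl⟩, hFdecomp t' ht' t ht htt _ hj]

/-- A decomposable linear probability dynamics is divisible iff each
decomposing map extends to a convex-combination preserving self-map of the simplex. -/
theorem stmt_12 (N : ℕ) (T : Set ℝ) (hT0 : (0:ℝ) ∈ T)
    (Pm : ℝ → Matrix (Fin N) (Fin N) ℝ)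
    (hstoch : ∀ t ∈ T, ColStochastic (Pm t))
    (hP0 : ∀ p ∈ stdSimplex ℝ (Fin N), (Pm 0).mulVec p = p)
    (F : ℝ → ℝ → (Fin N → ℝ) → (Fin N → ℝ))
    (hFmap : ∀ t' ∈ T, ∀ t ∈ T, t' ≤ t →
      ∀ x ∈ (fun p => (Pm t').mulVec p) '' stdSimplex ℝ (Fin N),
        F t t' x ∈ stdSimplex ℝ (Fin N))
    (hFdecomp : ∀ t' ∈ T, ∀ t ∈ T, t' ≤ t →
      ∀ p ∈ stdSimplex ℝ (Fin N), F t t' ((Pm t').mulVec p) = (Pm t).mulVec p) :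
    (∀ t' ∈ T, ∀ t ∈ T, t' ≤ t →
      ∃ X : Matrix (Fin N) (Fin N) ℝ, ColStochastic X ∧ Pm t = X * Pm t') ↔
    (∀ t' ∈ T, ∀ t ∈ T, t' ≤ t →
      ∃ g : (Fin N → ℝ) → (Fin N → ℝ),
        (∀ p ∈ stdSimplex ℝ (Fin N), g p ∈ stdSimplex ℝ (Fin N)) ∧
        (∀ p ∈ stdSimplex ℝ (Fin N), ∀ q ∈ stdSimplex ℝ (Fin N),
          ∀ l ∈ Set.Icc (0:ℝ) 1,
            g (l • p + (1 - l) • q) = l • g p + (1 - l) • g q) ∧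
        (∀ x ∈ (fun p => (Pm t').mulVec p) '' stdSimplex ℝ (Fin N), g x = F t t' x)) :=
  stmt_12_general N T Pm hstoch F hFdecomp
end

section
/- Let D : T × C → C be a deterministic dynamical system on finite C with D(0,·) = id, and let P^D be the induced linear probability dynamics with matrices P^D(t)_{ij} = [D(t,j) = i]. Then P^D is decomposable if and only if D is decomposable, i.e. if and only if for all t' ≤ t in T and all i, j ∈ C, D(t',i) = D(t',j) implies D(t,i) = D(t,j). -/
/-- The probability dynamics induced by a deterministic dynamical system `D`
is decomposable iff `D` is decomposable. -/
theorem stmt_16 (N : ℕ) (T : Set ℝ) (hT0 : (0:ℝ) ∈ T)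
    (D : ℝ → Fin N → Fin N) (hD0 : D 0 = id)
    (Pm : ℝ → Matrix (Fin N) (Fin N) ℝ)
    (hPm : ∀ t i j, Pm t i j = if D t j = i then 1 else 0) :
    (∀ t' ∈ T, ∀ t ∈ T, t' ≤ t →
      ∀ p₀ ∈ stdSimplex ℝ (Fin N), ∀ q₀ ∈ stdSimplex ℝ (Fin N),
        (Pm t').mulVec p₀ = (Pm t').mulVec q₀ → (Pm t).mulVec p₀ = (Pm t).mulVec q₀) ↔
    (∀ t' ∈ T, ∀ t ∈ T, t' ≤ t →
      ∀ i j : Fin N, D t' i = D t' j → D t i = D t j) := by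
  have hmul : ∀ s (v : Fin N → ℝ) k,
      (Pm s).mulVec v k = ∑ m, if D s m = k then v m else 0 := by
    intro s v k
    simp [Matrix.mulVec, dotProduct, hPm, ite_mul, one_mul, zero_mul]
  have hbasis : ∀ s (i : Fin N) k,
      (Pm s).mulVec (fun m => if m = i then (1:ℝ) else 0) k
        = if D s i = k then 1 else 0 := by
    intro s i k
    rw [hmul]
    rw [Finset.sum_eq_single i]
    · simp
    · intro b _ hb; simp [hb]
    · simp
  constructor
  · intro h t' ht' t ht htt i j hij
    have hmem : ∀ i : Fin N,
        (fun m => if m = i then (1:ℝ) else 0) ∈ stdSimplex ℝ (Fin N) := by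
      intro i
      constructor
      · intro k; dsimp; split <;> norm_num
      · simp
    have heq : (Pm t').mulVec (fun m => if m = i then (1:ℝ) else 0)
        = (Pm t').mulVec (fun m => if m = j then (1:ℝ) else 0) := by
      funext k
      rw [hbasis, hbasis, hij]
    have key := h t' ht' t ht htt _ (hmem i) _ (hmem j) heq
    have := congrFun key (D t i)
    rw [hbasis, hbasis] at this
    by_cases hc : D t j = D t i
    · exact hc.symm
    · rw [if_pos rfl, if_neg hc] at this
      norm_num at this
  · intro h t' ht' t ht htt p hp q hq heq
    funext k
    rw [hmul, hmul]
    rw [← Finset.sum_fiberwise Finset.univ (D t') (fun m => if D t m = k then p m else 0),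
        ← Finset.sum_fiberwise Finset.univ (D t') (fun m => if D t m = k then q m else 0)]
    refine Finset.sum_congr rfl ?_
    intro i _
    rcases (Finset.univ.filter (fun m => D t' m = i)).eq_empty_or_nonempty with he | ⟨j0, hj0⟩
    · rw [he]; simp
    · have hj0' : D t' j0 = i := by simpa using hj0
      have hconst : ∀ m ∈ Finset.univ.filter (fun m => D t' m = i), D t m = D t j0 := by
        intro m hm
        have hm' : D t' m = i := by simpa using hm
        exact h t' ht' t ht htt m j0 (hm'.trans hj0'.symm)
      have hsum : ∀ v : Fin N → ℝ,
          (∑ m ∈ Finset.univ.filter (fun m => D t' m = i), if D t m = k then v m else 0)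
            = if D t j0 = k then ∑ m ∈ Finset.univ.filter (fun m => D t' m = i), v m else 0 := by
        intro v
        by_cases hk : D t j0 = k
        · rw [if_pos hk]
          refine Finset.sum_congr rfl ?_
          intro m hm
          rw [if_pos ((hconst m hm).trans hk)]
        · rw [if_neg hk]
          refine Finset.sum_eq_zero ?_
          intro m hm
          rw [if_neg (fun hc => hk ((hconst m hm).symm.trans hc))]
      rw [hsum, hsum]
      have hfib : (∑ m ∈ Finset.univ.filter (fun m => D t' m = i), p m)
          = ∑ m ∈ Finset.univ.filter (fun m => D t' m = i), q m := by
        have := congrFun heq i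
        rw [hmul, hmul] at this
        simpa [Finset.sum_filter] using this
      rw [hfib]
end
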